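/- In Tardis TSO, the store timestamps of a single core are strictly handled so that Load→Load, Load→Store, and Store→Store program orderings imply nondecreasing timestamps: for operations X <_p Y where (X, Y) is (load, load), (load, store), or (store, store), we have ts(X) ≤ ts(Y). -/
import Mathlib


inductive Op where
  | load (t : ℕ)
  | store (t : ℕ)

def Op.ts : Op → ℕ
  | .load t => t
  | .store t => t

def Op.isLoad : Op → Prop
  | .load _ => True
  | .store _ => False

def Op.isStore : Op → Prop
  | .load _ => False
  | .store _ => True

/-- Tardis TSO timestamp discipline: Load→Load, Load→Store and Store→Store
program orderings imply nondecreasing timestamps. -/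
theorem tso_timestamp_orderings (ops : ℕ → Op) (lts sts : ℕ → ℕ)
    (hstep : ∀ n, match ops n with
      | .load t => lts n ≤ t ∧ lts (n + 1) = t ∧ sts (n + 1) = sts n
      | .store t => lts n ≤ t ∧ sts n ≤ t ∧ sts (n + 1) = t ∧
          lts (n + 1) = lts n) :
    ∀ i j, i < j →
      ((ops i).isLoad → (ops i).ts ≤ (ops j).ts) ∧
      ((ops i).isStore → (ops j).isStore → (ops i).ts ≤ (ops j).ts) := by
  have hlmono : Monotone lts := by
    apply monotone_nat_of_le_succ
    intro n
    have h := hstep n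
    cases hn : ops n with
    | load t => rw [hn] at h; simp only at h; omega
    | store t => rw [hn] at h; simp only at h; omega
  have hsmono : Monotone sts := by
    apply monotone_nat_of_le_succ
    intro n
    have h := hstep n
    cases hn : ops n with
    | load t => rw [hn] at h; simp only at h; omega
    | store t => rw [hn] at h; simp only at h; omega
  intro i j hij
  have hi := hstep i
  have hj := hstep j
  have hlij : lts (i + 1) ≤ lts j := hlmono hij
  have hsij : sts (i + 1) ≤ sts j := hsmono hij
  cases hopi : ops i with
  | load t =>
    rw [hopi] at hi; simp only at hi
    constructor
    · intro _
      cases hopj : ops j with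
      | load t' =>
        rw [hopj] at hj; simp only at hj
        simp only [Op.ts]; omega
      | store t' =>
        rw [hopj] at hj; simp only at hj
        simp only [Op.ts]; omega
    · intro h; exact absurd h (by simp [hopi, Op.isStore])
  | store t =>
    rw [hopi] at hi; simp only at hi
    constructor
    · intro h; exact absurd h (by simp [hopi, Op.isLoad])
    · intro _ hjs
      cases hopj : ops j with
      | load t' => exact absurd hjs (by simp [hopj, Op.isStore])
      | store t' =>
        rw [hopj] at hj; simp only at hj
        simp only [Op.ts]; omega
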